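/- Let Y be a complete doubling metric space, Z a standard Borel space, and π : Y → Z a Borel measurable map. Let μ be a Borel probability measure on Y, let ν = π_*μ be its push-forward, and let (μ_z)_{z∈Z} be a disintegration of μ over ν along π. Assume there exists a constant γ ≥ 0 such that for μ-almost every y ∈ Y the lower pointwise dimension of μ_{π(y)} at y is ≥ γ. Then for μ-almost every y ∈ Y, the upper pointwise dimension of μ at y is ≥ γ. -/

import Mathlib

open MeasureTheory Filter Topology

/-- The lower pointwise dimension of a measure `m` at a point `w`:
`liminf_{ρ → 0⁺} log m(B(w,ρ)) / log ρ`, where `B(w,ρ)` is the closed ball. -/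
noncomputable def lowerPointwiseDim {W : Type*} [MetricSpace W] [MeasurableSpace W]
    (m : Measure W) (w : W) : ℝ :=
  liminf (fun ρ : ℝ => Real.log (m (Metric.closedBall w ρ)).toReal / Real.log ρ)
    (𝓝[>] (0 : ℝ))

/-- The upper pointwise dimension of a measure `m` at a point `w`:
`limsup_{ρ → 0⁺} log m(B(w,ρ)) / log ρ`, where `B(w,ρ)` is the closed ball. -/
noncomputable def upperPointwiseDim {W : Type*} [MetricSpace W] [MeasurableSpace W]
    (m : Measure W) (w : W) : ℝ :=
  limsup (fun ρ : ℝ => Real.log (m (Metric.closedBall w ρ)).toReal / Real.log ρ)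
    (𝓝[>] (0 : ℝ))


/-!
If `μ(B(y,ρ)) ≤ K · μ_{π y}(B(y,ρ))` along a sequence `ρ → 0`, then `μ` inherits at `y` the
fibre's bound `μ_{π y}(B(y,ρ)) ≤ ρ^(γ-δ)` along that sequence, which bounds the upper dimension
from below. The set where `K · μ_{π y}(B(y,R)) ≤ μ(B(y,R))` has `μ`-measure at most `N² / K`:
on each fibre, the `R`-balls around a maximal `R`-separated subset of it cover it and overlap at
most `N²` times by doubling, so its fibre measure is at most `N² / K`; integrate over the fibres.
Taking `K = 2^m`, `m → ∞`, almost every `y` admits such a sequence for some `K`.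

Doubling also gives `μ(B(y,ρ)) ≥ ρ^(2(N+1))` for small `ρ` at almost every `y`, by a
Borel–Cantelli argument on dyadic scales; without it the `limsup` defining the upper dimension
could be unbounded, where Lean's `limsup` takes the junk value `0`.
-/
open Metric Set ProbabilityTheory
open scoped ENNReal

theorem ENNReal.natCast_mul_inv_two_pow_le_one (N : ℕ) : (N : ℝ≥0∞) * 2⁻¹ ^ N ≤ 1 := by
  rw [← ENNReal.inv_pow, ← div_eq_mul_inv, ENNReal.div_le_iff (by simp) (by simp), one_mul]
  exact_mod_cast Nat.lt_two_pow_self.le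

theorem eventually_pow_le_of_eventually_inv_two_pow_le {f : ℝ → ℝ} (hf : Monotone f) {q : ℕ}
    (h : ∀ᶠ k in atTop, ((2 : ℝ)⁻¹ ^ k) ^ q ≤ f (2⁻¹ ^ k)) :
    ∀ᶠ ρ in 𝓝[>] 0, ρ ^ (2 * q) ≤ f ρ := by
  obtain ⟨k₀, hk₀⟩ := eventually_atTop.1 h
  filter_upwards [Ioc_mem_nhdsGT (show (0 : ℝ) < 2⁻¹ ^ (k₀ + 1) by positivity)] with ρ ⟨hρ₀, hρ⟩
  obtain ⟨n, hn_lt, hn_le⟩ := exists_nat_pow_near_of_lt_one hρ₀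
    (hρ.trans (pow_le_one₀ (by norm_num) (by norm_num))) (by norm_num : (0 : ℝ) < 2⁻¹)
    (by norm_num)
  have hk₀n : k₀ < n := by
    have := hn_lt.trans_le hρ
    rw [pow_lt_pow_iff_right_of_lt_one₀ (by norm_num) (by norm_num)] at this
    omega
  calc ρ ^ (2 * q) ≤ ((2 : ℝ)⁻¹ ^ n) ^ (2 * q) := pow_le_pow_left₀ hρ₀.le hn_le _
    _ = ((2 : ℝ)⁻¹ ^ (2 * n)) ^ q := by ring
    _ ≤ ((2 : ℝ)⁻¹ ^ (n + 1)) ^ q :=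
      pow_le_pow_left₀ (by positivity)
        (pow_le_pow_of_le_one (by norm_num) (by norm_num) (by omega)) q
    _ ≤ f (2⁻¹ ^ (n + 1)) := hk₀ (n + 1) (by omega)
    _ ≤ f ρ := hf hn_lt.le

theorem measure_setOf_eventually_mem_le {α : Type*} [MeasurableSpace α] (μ : Measure α)
    {s : ℕ → Set α} {c : ℝ≥0∞} (h : ∀ k, μ (s k) ≤ c) :
    μ {x | ∀ᶠ k in atTop, x ∈ s k} ≤ c := by
  have hunion : {x | ∀ᶠ k in atTop, x ∈ s k} = ⋃ n, ⋂ k ≥ n, s k := by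
    ext x
    simp [eventually_atTop]
  rw [hunion, Monotone.measure_iUnion fun n n' hn => biInter_subset_biInter_left fun k hk =>
    hn.trans hk]
  exact iSup_le fun n => (measure_mono (biInter_subset_of_mem le_rfl)).trans (h n)

theorem ae_exists_frequently_notMem {α : Type*} [MeasurableSpace α] (μ : Measure α)
    {G : ℕ → ℕ → Set α} {ε : ℕ → ℝ≥0∞} (hε : Tendsto ε atTop (𝓝 0))
    (hG : ∀ m k, μ (G m k) ≤ ε m) : ∀ᵐ x ∂μ, ∃ m, ∃ᶠ k in atTop, x ∉ G m k := by
  simp only [ae_iff, not_exists, not_frequently, not_not]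
  refine le_antisymm (ge_of_tendsto' hε fun m => ?_) zero_le
  have hsub : {x | ∀ m, ∀ᶠ k in atTop, x ∈ G m k} ⊆ {x | ∀ᶠ k in atTop, x ∈ G m k} :=
    fun x hx => hx m
  exact (measure_mono hsub).trans (measure_setOf_eventually_mem_le μ (hG m))

theorem le_limsup_log_div_log {a b : ℝ → ℝ} {p : ℕ} {C γ : ℝ}
    (ha : ∀ᶠ ρ in 𝓝[>] 0, ρ ^ p ≤ a ρ) (hb₀ : ∀ ρ, 0 ≤ b ρ) (hb₁ : ∀ ρ, b ρ ≤ 1)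
    (hab : ∃ᶠ ρ in 𝓝[>] 0, a ρ ≤ C * b ρ)
    (hγ : γ ≤ liminf (fun ρ => Real.log (b ρ) / Real.log ρ) (𝓝[>] 0)) :
    γ ≤ limsup (fun ρ => Real.log (a ρ) / Real.log ρ) (𝓝[>] 0) := by
  have hsmall : ∀ᶠ ρ in 𝓝[>] (0 : ℝ), ρ ∈ Ioo 0 1 := Ioo_mem_nhdsGT one_pos
  have hlog_neg : ∀ᶠ ρ in 𝓝[>] (0 : ℝ), Real.log ρ < 0 :=
    hsmall.mono fun ρ hρ => Real.log_neg hρ.1 hρ.2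
  have ha_pos : ∀ᶠ ρ in 𝓝[>] (0 : ℝ), 0 < a ρ :=
    (ha.and hsmall).mono fun ρ hρ => (pow_pos hρ.2.1 p).trans_le hρ.1
  have hbdd : IsBoundedUnder (· ≤ ·) (𝓝[>] 0) fun ρ => Real.log (a ρ) / Real.log ρ := by
    refine ⟨p, eventually_map.2 ?_⟩
    filter_upwards [ha, hsmall, hlog_neg] with ρ haρ hρ hlogρ
    rw [div_le_iff_of_neg hlogρ, ← Real.log_pow]
    exact Real.log_le_log (pow_pos hρ.1 p) haρ
  have hbdd_b : IsBoundedUnder (· ≥ ·) (𝓝[>] 0) fun ρ => Real.log (b ρ) / Real.log ρ :=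
    ⟨0, eventually_map.2 (hlog_neg.mono fun ρ hρ =>
      div_nonneg_of_nonpos (Real.log_nonpos (hb₀ ρ) (hb₁ ρ)) hρ.le)⟩
  have hC : Tendsto (fun ρ => Real.log C / Real.log ρ) (𝓝[>] 0) (𝓝 0) :=
    tendsto_const_nhds.div_atBot Real.tendsto_log_nhdsGT_zero
  refine le_of_forall_sub_le fun δ hδ => le_limsup_of_frequently_le ?_ hbdd
  have hb_low := eventually_lt_of_lt_liminf (show γ - δ / 2 < _ by linarith) hbdd_b
  have hC_low : ∀ᶠ ρ in 𝓝[>] (0 : ℝ), -(δ / 2) < Real.log C / Real.log ρ :=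
    hC.eventually (lt_mem_nhds (by linarith))
  refine (hab.and_eventually (ha_pos.and (hlog_neg.and (hb_low.and hC_low)))).mono ?_
  rintro ρ ⟨habρ, haρ, hlogρ, hbρ, hCρ⟩
  have hCb : 0 < C * b ρ := haρ.trans_le habρ
  have hC_pos : 0 < C := pos_of_mul_pos_left hCb (hb₀ ρ)
  have hb : 0 < b ρ := pos_of_mul_pos_right hCb hC_pos.le
  have hlog : Real.log (a ρ) ≤ Real.log C + Real.log (b ρ) := by
    rw [← Real.log_mul hC_pos.ne' hb.ne']
    exact Real.log_le_log haρ habρ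
  calc γ - δ ≤ Real.log C / Real.log ρ + Real.log (b ρ) / Real.log ρ := by linarith
    _ = (Real.log C + Real.log (b ρ)) / Real.log ρ := (add_div _ _ _).symm
    _ ≤ Real.log (a ρ) / Real.log ρ := div_le_div_of_nonpos_of_le hlogρ.le hlog

theorem exists_countable_pairwise_lt_dist_cover {Y : Type*} [PseudoMetricSpace Y]
    [TopologicalSpace.SeparableSpace Y] (F : Set Y) {R : ℝ} (hR : 0 < R) :
    ∃ S ⊆ F, S.Countable ∧ S.Pairwise (R < dist · ·) ∧ F ⊆ ⋃ y ∈ S, closedBall y R := by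
  obtain ⟨S, -, hmax⟩ := zorn_subset_nonempty {S | S ⊆ F ∧ S.Pairwise (R < dist · ·)}
    (fun c hc hchain _ => ⟨⋃₀ c, ⟨sUnion_subset fun s hs => (hc hs).1,
      hchain.pairwise_sUnion.2 fun s hs => (hc hs).2⟩, fun s hs => subset_sUnion_of_mem hs⟩)
    ∅ ⟨empty_subset _, pairwise_empty _⟩
  obtain ⟨hSF, hS⟩ := hmax.prop
  refine ⟨S, hSF, ?_, hS, fun x hx => ?_⟩
  · refine PairwiseDisjoint.countable_of_isOpen (s := fun y => ball y (R / 2))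
      (fun a ha b hb hab => ball_disjoint_ball ?_) (fun _ _ => isOpen_ball)
      (fun _ _ => nonempty_ball.2 (half_pos hR))
    linarith [hS ha hb hab]
  · by_contra hx_far
    simp only [mem_iUnion, mem_closedBall, not_exists, not_le] at hx_far
    have hxS : x ∉ S := fun hxS => (hx_far x hxS).not_ge (by simp [hR.le])
    have hins : insert x S ⊆ F ∧ (insert x S).Pairwise (R < dist · ·) :=
      ⟨insert_subset hx hSF, hS.insert fun y hy _ =>
        ⟨hx_far y hy, by rw [dist_comm]; exact hx_far y hy⟩⟩
    exact hxS (hmax.2 hins (subset_insert x S) (mem_insert x S))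

theorem tsum_measure_le_of_encard_le {α ι : Type*} [MeasurableSpace α] [Countable ι]
    (μ : Measure α) {s : ι → Set α} (hs : ∀ i, MeasurableSet (s i)) {n : ℕ}
    (hn : ∀ x, {i | x ∈ s i}.encard ≤ n) : ∑' i, μ (s i) ≤ n * μ univ := by
  calc ∑' i, μ (s i) = ∫⁻ x, ∑' i, (s i).indicator 1 x ∂μ := by
        rw [lintegral_tsum fun i => (measurable_one.indicator (hs i)).aemeasurable]
        simp_rw [lintegral_indicator_one (hs _)]
    _ = ∫⁻ x, {i | x ∈ s i}.encard ∂μ := by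
        congr with x
        rw [← ENNReal.tsum_set_one, tsum_subtype {i | x ∈ s i} fun _ => 1]
        rfl
    _ ≤ ∫⁻ _, (n : ℝ≥0∞) ∂μ := lintegral_mono fun x => by simpa using ENat.toENNReal_le.2 (hn x)
    _ = n * μ univ := lintegral_const _

theorem ProbabilityTheory.Kernel.measurable_apply_closedBall {Y : Type*} [PseudoMetricSpace Y]
    [MeasurableSpace Y] [OpensMeasurableSpace Y] [SecondCountableTopology Y] (κ : Kernel Y Y)
    [IsSFiniteKernel κ] (r : ℝ) : Measurable fun y => κ y (closedBall y r) :=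
  Kernel.measurable_kernel_prodMk_left
    (isClosed_le (continuous_snd.dist continuous_fst) continuous_const).measurableSet

def IsDoublingWith (N : ℕ) (Y : Type*) [PseudoMetricSpace Y] : Prop :=
  ∀ (y : Y) (r : ℝ), ∃ s : Finset Y, s.card ≤ N ∧ closedBall y r ⊆ ⋃ z ∈ s, closedBall z (r / 2)

namespace IsDoublingWith

variable {N : ℕ} {Y : Type*} [PseudoMetricSpace Y]

theorem exists_cover_pow (h : IsDoublingWith N Y) (k : ℕ) (y : Y) (r : ℝ) :
    ∃ s : Finset Y, s.card ≤ N ^ k ∧ closedBall y r ⊆ ⋃ z ∈ s, closedBall z (r / 2 ^ k) := by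
  classical
  induction k with
  | zero => exact ⟨{y}, by simp, by simp⟩
  | succ k ih =>
    obtain ⟨s, hcard, hcov⟩ := ih
    choose t ht_card ht_cov using fun z : Y => h z (r / 2 ^ k)
    refine ⟨s.biUnion t, ?_, fun x hx => ?_⟩
    · calc (s.biUnion t).card ≤ ∑ z ∈ s, (t z).card := Finset.card_biUnion_le
        _ ≤ s.card * N := by simpa using Finset.sum_le_card_nsmul s _ N fun z _ => ht_card z
        _ ≤ N ^ (k + 1) := by rw [pow_succ]; gcongr
    · obtain ⟨z, hz, hxz⟩ := mem_iUnion₂.1 (hcov hx)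
      obtain ⟨w, hw, hxw⟩ := mem_iUnion₂.1 (ht_cov z hxz)
      rw [pow_succ, ← div_div]
      exact mem_iUnion₂.2 ⟨w, Finset.mem_biUnion.2 ⟨z, hz, hw⟩, hxw⟩

theorem encard_le_of_pairwise_lt_dist (h : IsDoublingWith N Y) {x : Y} {R : ℝ} {S : Set Y}
    (hSx : S ⊆ closedBall x R) (hS : S.Pairwise (R < dist · ·)) : S.encard ≤ N ^ 2 := by
  obtain ⟨s, hcard, hcov⟩ := h.exists_cover_pow 2 x R
  have hnear : ∀ y ∈ S, ∃ w ∈ s, dist y w ≤ R / 2 ^ 2 := fun y hy => by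
    simpa using hcov (hSx hy)
  choose! f hfs hf using hnear
  have hinj : InjOn f S := by
    intro a ha b hb hab
    by_contra hne
    have hab_sep := hS ha hb hne
    have hR := (mem_closedBall.1 (hSx ha)).trans' dist_nonneg
    have := dist_triangle_right a b (f a)
    have := hf a ha
    have := hf b hb
    rw [← hab] at this
    linarith
  calc S.encard ≤ (s : Set Y).encard := encard_le_encard_of_injOn (fun y hy => hfs y hy) hinj
    _ = s.card := encard_coe_eq_coe_finsetCard s
    _ ≤ N ^ 2 := by exact_mod_cast hcard

theorem separableSpace (h : IsDoublingWith N Y) : TopologicalSpace.SeparableSpace Y := by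
  rcases isEmpty_or_nonempty Y with hY | ⟨⟨y₀⟩⟩
  · infer_instance
  have htb : ∀ n : ℕ, TotallyBounded (closedBall y₀ n) := fun n => by
    refine Metric.totallyBounded_iff.2 fun ε hε => ?_
    obtain ⟨k, hk⟩ := pow_unbounded_of_one_lt (n / ε) one_lt_two
    obtain ⟨s, -, hcov⟩ := h.exists_cover_pow k y₀ n
    refine ⟨s, s.finite_toSet, hcov.trans (iUnion₂_mono fun z _ => closedBall_subset_ball ?_)⟩
    rwa [div_lt_iff₀ (by positivity), mul_comm, ← div_lt_iff₀ hε]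
  rw [← TopologicalSpace.isSeparable_univ_iff, ← iUnion_closedBall_nat y₀]
  exact TopologicalSpace.isSeparable_iUnion.2 fun n => (htb n).isSeparable

section Measure

variable [MeasurableSpace Y]

theorem measure_setOf_measure_closedBall_le (h : IsDoublingWith N Y) (μ : Measure Y) (y₀ : Y)
    {r ρ : ℝ} (c : ℝ≥0∞) (k : ℕ) (hk : 2 * (r / 2 ^ k) ≤ ρ) :
    μ {y ∈ closedBall y₀ r | μ (closedBall y ρ) ≤ c} ≤ N ^ k * c := by
  classical
  obtain ⟨s, hcard, hcov⟩ := h.exists_cover_pow k y₀ r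
  set t := s.filter fun w => μ (closedBall w (r / 2 ^ k)) ≤ c
  -- a small ball meeting the set lies inside a `ρ`-ball of measure at most `c`
  have hsub : {y ∈ closedBall y₀ r | μ (closedBall y ρ) ≤ c}
      ⊆ ⋃ w ∈ t, closedBall w (r / 2 ^ k) := by
    rintro y ⟨hy, hyc⟩
    obtain ⟨w, hw, hyw⟩ := mem_iUnion₂.1 (hcov hy)
    refine mem_iUnion₂.2 ⟨w, Finset.mem_filter.2 ⟨hw, (measure_mono fun x hx => ?_).trans hyc⟩, hyw⟩
    have := dist_triangle_right x y w
    have := mem_closedBall.1 hx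
    have := mem_closedBall.1 hyw
    exact mem_closedBall.2 (by linarith)
  calc μ {y ∈ closedBall y₀ r | μ (closedBall y ρ) ≤ c}
      ≤ ∑ w ∈ t, μ (closedBall w (r / 2 ^ k)) :=
        (measure_mono hsub).trans (measure_biUnion_finset_le t _)
    _ ≤ t.card * c := by
      simpa using Finset.sum_le_card_nsmul t _ c fun w hw => (Finset.mem_filter.1 hw).2
    _ ≤ N ^ k * c := by
      gcongr
      exact_mod_cast (Finset.card_filter_le s _).trans hcard

theorem ae_eventually_inv_two_pow_lt_measure_closedBall (h : IsDoublingWith N Y) (μ : Measure Y) :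
    ∀ᵐ y ∂μ, ∀ᶠ k in atTop, (2⁻¹ : ℝ≥0∞) ^ (k * (N + 1)) < μ (closedBall y (2⁻¹ ^ k)) := by
  rcases isEmpty_or_nonempty Y with hY | ⟨⟨y₀⟩⟩
  · exact .of_forall fun y => isEmptyElim y
  set bad : ℕ → ℕ → Set Y := fun M k =>
    {y ∈ closedBall y₀ M | μ (closedBall y (2⁻¹ ^ k)) ≤ 2⁻¹ ^ (k * (N + 1))}
  have hbad : ∀ M k, μ (bad M k) ≤ N ^ (M + 1) * 2⁻¹ ^ k := fun M k => by
    have hradius : 2 * ((M : ℝ) / 2 ^ (M + 1 + k)) ≤ 2⁻¹ ^ k := by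
      have hM : (M : ℝ) ≤ 2 ^ M := by exact_mod_cast Nat.lt_two_pow_self.le
      rw [pow_add, pow_succ, inv_pow, mul_div_assoc', div_le_iff₀ (by positivity)]
      field_simp
      linarith
    calc μ (bad M k) ≤ N ^ (M + 1 + k) * 2⁻¹ ^ (k * (N + 1)) :=
          h.measure_setOf_measure_closedBall_le μ y₀ _ _ hradius
      _ = N ^ (M + 1) * 2⁻¹ ^ k * ((N : ℝ≥0∞) * 2⁻¹ ^ N) ^ k := by ring
      _ ≤ N ^ (M + 1) * 2⁻¹ ^ k * 1 := by
          gcongr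
          exact pow_le_one₀ zero_le (ENNReal.natCast_mul_inv_two_pow_le_one N)
      _ = N ^ (M + 1) * 2⁻¹ ^ k := mul_one _
  have hsummable : ∀ M, ∑' k, μ (bad M k) ≠ ∞ := fun M =>
    ne_top_of_le_ne_top (by simp [ENNReal.tsum_mul_left, ENNReal.mul_eq_top])
      (ENNReal.tsum_le_tsum (hbad M))
  filter_upwards [ae_all_iff.2 fun M => ae_eventually_notMem (hsummable M)] with y hy
  obtain ⟨M, hM⟩ := exists_nat_ge (dist y y₀)
  filter_upwards [hy M] with k hk
  simpa [bad, hM] using hk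

theorem ae_eventually_pow_le_measure_closedBall (h : IsDoublingWith N Y) (μ : Measure Y)
    [IsFiniteMeasure μ] :
    ∀ᵐ y ∂μ, ∀ᶠ ρ in 𝓝[>] 0, ρ ^ (2 * (N + 1)) ≤ (μ (closedBall y ρ)).toReal := by
  filter_upwards [h.ae_eventually_inv_two_pow_lt_measure_closedBall μ] with y hy
  refine eventually_pow_le_of_eventually_inv_two_pow_le (fun ρ ρ' hρ =>
    ENNReal.toReal_mono (measure_ne_top _ _) (measure_mono (closedBall_subset_closedBall hρ))) ?_
  filter_upwards [hy] with k hk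
  have := ENNReal.toReal_mono (measure_ne_top _ _) hk.le
  simpa [← pow_mul, mul_comm] using this

theorem mul_measure_le_of_forall_mul_measure_closedBall_le [TopologicalSpace.SeparableSpace Y]
    [OpensMeasurableSpace Y] (h : IsDoublingWith N Y) (m μ : Measure Y) {R : ℝ} (hR : 0 < R)
    {K : ℝ≥0∞} {F : Set Y} (hF : ∀ y ∈ F, K * m (closedBall y R) ≤ μ (closedBall y R)) :
    K * m F ≤ N ^ 2 * μ univ := by
  obtain ⟨S, hSF, hSc, hS, hcov⟩ := exists_countable_pairwise_lt_dist_cover F hR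
  have := hSc.to_subtype
  have hoverlap : ∀ x, {y : S | x ∈ closedBall (y : Y) R}.encard ≤ (N ^ 2 : ℕ) := fun x => by
    rw [← Subtype.val_injective.encard_image]
    refine h.encard_le_of_pairwise_lt_dist (x := x) ?_ (hS.mono ?_)
    · rintro _ ⟨y, hy, rfl⟩
      exact mem_closedBall_comm.1 hy
    · rintro _ ⟨y, -, rfl⟩
      exact y.2
  calc K * m F ≤ K * ∑' y : S, m (closedBall y R) :=
        mul_le_mul_right ((measure_mono hcov).trans (measure_biUnion_le m hSc _)) K
    _ = ∑' y : S, K * m (closedBall y R) := ENNReal.tsum_mul_left.symm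
    _ ≤ ∑' y : S, μ (closedBall y R) := ENNReal.tsum_le_tsum fun y => hF y (hSF y.2)
    _ ≤ (N ^ 2 : ℕ) * μ univ :=
        tsum_measure_le_of_encard_le μ (fun _ => measurableSet_closedBall) hoverlap
    _ = N ^ 2 * μ univ := by push_cast; rfl

theorem mul_measure_setOf_mul_le_measure_closedBall_le {Z : Type*} [SecondCountableTopology Y]
    [OpensMeasurableSpace Y] [MeasurableSpace Z] (h : IsDoublingWith N Y) {π : Y → Z}
    (hπ : Measurable π) (μ : Measure Y) [IsProbabilityMeasure μ] (κ : Kernel Z Y) [IsSFiniteKernel κ]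
    (hfiber : ∀ᵐ z ∂(μ.map π), κ z ((π ⁻¹' {z})ᶜ) = 0)
    (hdis : ∀ s : Set Y, MeasurableSet s → μ s = ∫⁻ z, κ z s ∂(μ.map π))
    (K : ℝ≥0∞) {R : ℝ} (hR : 0 < R) :
    K * μ {y | K * κ (π y) (closedBall y R) ≤ μ (closedBall y R)} ≤ N ^ 2 := by
  have := Measure.isProbabilityMeasure_map (μ := μ) hπ.aemeasurable
  set E := {y | K * κ (π y) (closedBall y R) ≤ μ (closedBall y R)}
  have hE : MeasurableSet E := measurableSet_le
    (((κ.comap π hπ).measurable_apply_closedBall R).const_mul K)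
    ((Kernel.const Y μ).measurable_apply_closedBall R)
  have hfiber_bound : ∀ᵐ z ∂(μ.map π), K * κ z E ≤ N ^ 2 := by
    filter_upwards [hfiber] with z hz
    rw [← measure_inter_conull hz]
    calc K * κ z (E ∩ π ⁻¹' {z}) ≤ N ^ 2 * μ univ :=
          h.mul_measure_le_of_forall_mul_measure_closedBall_le _ _ hR fun y ⟨hyE, hyz⟩ => by
            rw [← mem_singleton_iff.1 hyz]
            exact hyE
      _ = N ^ 2 := by simp
  calc K * μ E = ∫⁻ z, K * κ z E ∂(μ.map π) := by
        rw [hdis E hE, lintegral_const_mul K (κ.measurable_coe hE)]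
    _ ≤ ∫⁻ _, (N : ℝ≥0∞) ^ 2 ∂(μ.map π) := lintegral_mono_ae hfiber_bound
    _ = N ^ 2 := by simp

end Measure

end IsDoublingWith

theorem upperDim_ge_of_fiber_dim_ge_doubling_general
    {Y Z : Type*}
    [MetricSpace Y]
    [MeasurableSpace Y] [BorelSpace Y]
    [MeasurableSpace Z]
    (hdoub : ∃ N : ℕ, ∀ (y : Y) (r : ℝ), ∃ s : Finset Y,
      s.card ≤ N ∧ Metric.closedBall y r ⊆ ⋃ z ∈ s, Metric.closedBall z (r / 2))
    (π : Y → Z) (hπ : Measurable π)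
    (μ : Measure Y) [IsProbabilityMeasure μ]
    (μz : Z → Measure Y)
    (hfam : ∀ s : Set Y, MeasurableSet s → Measurable fun z => μz z s)
    (hprob : ∀ z, IsProbabilityMeasure (μz z))
    (hfiber : ∀ᵐ z ∂(μ.map π), μz z ((π ⁻¹' {z})ᶜ) = 0)
    (hdis : ∀ s : Set Y, MeasurableSet s → μ s = ∫⁻ z, μz z s ∂(μ.map π))
    (γ : ℝ)
    (hi : ∀ᵐ y ∂μ, γ ≤ lowerPointwiseDim (μz (π y)) y) :
    ∀ᵐ y ∂μ, γ ≤ upperPointwiseDim μ y := by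
  obtain ⟨N, hN : IsDoublingWith N Y⟩ := hdoub
  have := hN.separableSpace
  have := UniformSpace.secondCountable_of_separable Y
  let κ : Kernel Z Y := ⟨μz, Measure.measurable_of_measurable_coe μz hfam⟩
  have : IsMarkovKernel κ := ⟨hprob⟩
  have hcompare : ∀ᵐ y ∂μ, ∃ m : ℕ, ∃ᶠ k in atTop,
      μ (closedBall y (2⁻¹ ^ k)) ≤ 2 ^ m * μz (π y) (closedBall y (2⁻¹ ^ k)) := by
    have hε : Tendsto (fun m : ℕ => (N : ℝ≥0∞) ^ 2 / 2 ^ m) atTop (𝓝 0) := by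
      simpa [div_eq_mul_inv, ← ENNReal.inv_pow] using ENNReal.Tendsto.const_mul
        (ENNReal.tendsto_pow_atTop_nhds_zero_of_lt_one (r := 2⁻¹) (by norm_num)) (.inr (by simp))
    have hG : ∀ m k : ℕ, μ {y | 2 ^ m * κ (π y) (closedBall y (2⁻¹ ^ k))
        ≤ μ (closedBall y (2⁻¹ ^ k))} ≤ N ^ 2 / 2 ^ m := fun m k => by
      rw [ENNReal.le_div_iff_mul_le (by simp) (by simp), mul_comm]
      exact hN.mul_measure_setOf_mul_le_measure_closedBall_le hπ μ κ hfiber hdis _ (by positivity)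
    filter_upwards [ae_exists_frequently_notMem μ hε hG] with y ⟨m, hm⟩
    exact ⟨m, hm.mono fun k hk => (not_le.1 hk).le⟩
  filter_upwards [hi, hN.ae_eventually_pow_le_measure_closedBall μ, hcompare] with y hy hpow ⟨m, hm⟩
  refine le_limsup_log_div_log (C := 2 ^ m) hpow (fun _ => ENNReal.toReal_nonneg)
    (fun _ => measureReal_le_one) ?_ hy
  have hdyadic := tendsto_pow_atTop_nhdsWithin_zero_of_lt_one (r := (2 : ℝ)⁻¹) (by norm_num)
    (by norm_num)
  refine hdyadic.frequently (hm.mono fun k hk => ?_)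
  simpa using ENNReal.toReal_mono (by finiteness) hk

/-- Let `Y` be a complete doubling metric space, `Z` a standard Borel
space, `π : Y → Z` Borel measurable, `μ` a Borel probability measure on `Y`,
`ν = π_*μ` and `(μz z)` a disintegration of `μ` over `ν` along `π`.  If for `μ`-a.e.
`y` the lower pointwise dimension of `μz (π y)` at `y` is `≥ γ`, then for `μ`-a.e. `y`
the upper pointwise dimension of `μ` at `y` is `≥ γ`. -/
theorem upperDim_ge_of_fiber_dim_ge_doubling
    {Y Z : Type*}
    [MetricSpace Y] [CompleteSpace Y]
    [MeasurableSpace Y] [BorelSpace Y]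
    [MeasurableSpace Z] [StandardBorelSpace Z]
    (hdoub : ∃ N : ℕ, ∀ (y : Y) (r : ℝ), ∃ s : Finset Y,
      s.card ≤ N ∧ Metric.closedBall y r ⊆ ⋃ z ∈ s, Metric.closedBall z (r / 2))
    (π : Y → Z) (hπ : Measurable π)
    (μ : Measure Y) [IsProbabilityMeasure μ]
    (μz : Z → Measure Y)
    (hfam : ∀ s : Set Y, MeasurableSet s → Measurable fun z => μz z s)
    (hprob : ∀ z, IsProbabilityMeasure (μz z))
    (hfiber : ∀ᵐ z ∂(μ.map π), μz z ((π ⁻¹' {z})ᶜ) = 0)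
    (hdis : ∀ s : Set Y, MeasurableSet s → μ s = ∫⁻ z, μz z s ∂(μ.map π))
    (γ : ℝ) (hγ : 0 ≤ γ)
    (hi : ∀ᵐ y ∂μ, γ ≤ lowerPointwiseDim (μz (π y)) y) :
    ∀ᵐ y ∂μ, γ ≤ upperPointwiseDim μ y :=
  upperDim_ge_of_fiber_dim_ge_doubling_general hdoub π hπ μ μz hfam hprob hfiber hdis γ hi
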